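/- Let C ≤ F_q^{n×m} be a rank-metric code with associated q-polymatroid rank function ρ_C(V) = (dim C − dim C(V^⊥))/m. Then the dual rank function ρ_C*(V) := dim V − ρ_C(F_q^n) + ρ_C(V^⊥) equals ρ_{C^⊥}(V) for all V ≤ F_q^n; that is, the dual q-polymatroid of M_C is M_{C^⊥}. -/

import Mathlib

open Module

variable {K : Type} [Field K] [Fintype K] {n m : ℕ}

/-- Orthogonal complement w.r.t. the standard symmetric bilinear form on `Fin n → K`. -/
def stdPerp (V : Submodule K (Fin n → K)) : Submodule K (Fin n → K) where
  carrier := {w | ∀ v ∈ V, ∑ i, v i * w i = 0}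
  zero_mem' := by intro v hv; simp
  add_mem' := by
    intro a b ha hb v hv
    simp [Pi.add_apply, mul_add, Finset.sum_add_distrib, ha v hv, hb v hv]
  smul_mem' := by
    intro c a ha v hv
    simp only [Pi.smul_apply, smul_eq_mul, mul_left_comm, ← Finset.mul_sum, ha v hv, mul_zero]

/-- Matrices all of whose columns lie in `V` (i.e. with column space contained in `V`). -/
def colIn (m : ℕ) (V : Submodule K (Fin n → K)) : Submodule K (Matrix (Fin n) (Fin m) K) where
  carrier := {X | ∀ j, (fun i => X i j) ∈ V}
  zero_mem' := by
    intro j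
    show (fun i => (0 : Matrix (Fin n) (Fin m) K) i j) ∈ V
    simp only [Matrix.zero_apply]
    exact V.zero_mem
  add_mem' := by
    intro a b ha hb j
    exact V.add_mem (ha j) (hb j)
  smul_mem' := by
    intro c X hX j
    exact V.smul_mem c (hX j)

/-- The shortened subcode `C(W) = {X ∈ C : colsp X ≤ W}`. -/
def shortened (C : Submodule K (Matrix (Fin n) (Fin m) K))
    (W : Submodule K (Fin n → K)) : Submodule K (Matrix (Fin n) (Fin m) K) :=
  C ⊓ colIn m W

/-- The `q`-polymatroid rank function `ρ_C(V) = (dim C − dim C(V^⊥))/m`. -/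
noncomputable def rhoCode (C : Submodule K (Matrix (Fin n) (Fin m) K))
    (V : Submodule K (Fin n → K)) : ℚ :=
  ((finrank K C : ℚ) - (finrank K (shortened C (stdPerp V)) : ℚ)) / m

/-- The trace-dual code `C^⊥ = {X : tr(X Yᵀ) = 0 for all Y ∈ C}`. -/
def dualCode (C : Submodule K (Matrix (Fin n) (Fin m) K)) :
    Submodule K (Matrix (Fin n) (Fin m) K) where
  carrier := {X | ∀ Y ∈ C, ∑ i, ∑ j, X i j * Y i j = 0}
  zero_mem' := by intro Y hY; simp
  add_mem' := by
    intro a b ha hb Y hY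
    simp [Matrix.add_apply, add_mul, Finset.sum_add_distrib, ha Y hY, hb Y hY]
  smul_mem' := by
    intro c X hX Y hY
    simp only [Matrix.smul_apply, smul_eq_mul, mul_assoc, ← Finset.mul_sum, hX Y hY, mul_zero]

/-!
`stdPerp` and `dualCode` are the orthogonal complements for two nondegenerate forms, the dot
product on `Fin n → K` and the Frobenius form on matrices; hence they are involutive, turn `⊔`
into `⊓` and complement dimensions. The dual of `colIn m V` is `colIn m V^⊥`, so the shortened
dual code `C^⊥(V^⊥)` is `(C + colIn m V)^⊥`. Counting dimensions with the modular law gives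
`dim C^⊥(V^⊥) + m dim V = dim C^⊥ + dim C(V)`, which is the claimed identity divided by `m`.
-/

namespace LinearMap.BilinForm

variable {R M : Type*} [CommSemiring R] [AddCommMonoid M] [Module R M]

theorem orthogonal_sup (B : LinearMap.BilinForm R M) (N L : Submodule R M) :
    B.orthogonal (N ⊔ L) = B.orthogonal N ⊓ B.orthogonal L := by
  ext x
  exact sup_le_iff (c := LinearMap.ker (B.flip x))

theorem finrank_orthogonal_add {F V : Type*} [Field F] [AddCommGroup V] [Module F V]
    [FiniteDimensional F V] {B : LinearMap.BilinForm F V} (hB : B.Nondegenerate)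
    (W : Submodule F V) :
    finrank F (B.orthogonal W) + finrank F W = finrank F V := by
  have := Submodule.finrank_le W
  rw [finrank_orthogonal hB]
  omega

end LinearMap.BilinForm

namespace Matrix

open LinearMap

variable {F : Type*} [Field F] {ι κ : Type*} [Fintype ι] [Fintype κ]

theorem isSymm_dotProductBilin :
    BilinForm.IsSymm (dotProductBilin F F : LinearMap.BilinForm F (ι → F)) :=
  ⟨fun v w => dotProduct_comm v w⟩

theorem nondegenerate_dotProductBilin :
    (dotProductBilin F F : LinearMap.BilinForm F (ι → F)).Nondegenerate :=
  ⟨fun v hv => dotProduct_eq_zero v hv,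
    fun w hw => dotProduct_eq_zero w fun v => dotProduct_comm w v ▸ hw v⟩

def frobeniusBilin : LinearMap.BilinForm F (Matrix ι κ F) :=
  BilinForm.congr (LinearEquiv.curry F F ι κ) (dotProductBilin F F)

theorem frobeniusBilin_apply (X Y : Matrix ι κ F) :
    frobeniusBilin X Y = ∑ i, ∑ j, X i j * Y i j :=
  Fintype.sum_prod_type _

theorem nondegenerate_frobeniusBilin :
    (frobeniusBilin : LinearMap.BilinForm F (Matrix ι κ F)).Nondegenerate :=
  (BilinForm.nondegenerate_congr_iff _).mpr nondegenerate_dotProductBilin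

end Matrix

open LinearMap Matrix

section Codes

variable {F : Type} [Field F]

theorem stdPerp_eq_orthogonal (V : Submodule F (Fin n → F)) :
    stdPerp V = BilinForm.orthogonal (dotProductBilin F F) V := rfl

theorem dualCode_eq_orthogonal (C : Submodule F (Matrix (Fin n) (Fin m) F)) :
    dualCode C = frobeniusBilin.orthogonal C := by
  ext X
  simp only [BilinForm.mem_orthogonal_iff, frobeniusBilin_apply, mul_comm]
  rfl

theorem finrank_stdPerp_add (V : Submodule F (Fin n → F)) :
    finrank F (stdPerp V) + finrank F V = n := by
  rw [stdPerp_eq_orthogonal, BilinForm.finrank_orthogonal_add nondegenerate_dotProductBilin,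
    finrank_fin_fun]

theorem stdPerp_stdPerp (V : Submodule F (Fin n → F)) : stdPerp (stdPerp V) = V := by
  rw [stdPerp_eq_orthogonal, stdPerp_eq_orthogonal]
  exact BilinForm.orthogonal_orthogonal nondegenerate_dotProductBilin
    isSymm_dotProductBilin.isRefl V

theorem stdPerp_top : stdPerp (⊤ : Submodule F (Fin n → F)) = ⊥ :=
  BilinForm.orthogonal_top_eq_bot nondegenerate_dotProductBilin

theorem finrank_dualCode_add (C : Submodule F (Matrix (Fin n) (Fin m) F)) :
    finrank F (dualCode C) + finrank F C = n * m := by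
  rw [dualCode_eq_orthogonal, BilinForm.finrank_orthogonal_add nondegenerate_frobeniusBilin,
    finrank_matrix, Fintype.card_fin, Fintype.card_fin, finrank_self, mul_one]

theorem dualCode_sup (C D : Submodule F (Matrix (Fin n) (Fin m) F)) :
    dualCode (C ⊔ D) = dualCode C ⊓ dualCode D := by
  simp only [dualCode_eq_orthogonal, BilinForm.orthogonal_sup]

def colInEquivPi (V : Submodule F (Fin n → F)) : colIn m V ≃ₗ[F] (Fin m → V) where
  toFun X j := ⟨fun i => X.1 i j, X.2 j⟩
  invFun f := ⟨fun i j => (f j).1 i, fun j => (f j).2⟩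
  map_add' _ _ := rfl
  map_smul' _ _ := rfl
  left_inv _ := rfl
  right_inv _ := rfl

theorem finrank_colIn (V : Submodule F (Fin n → F)) :
    finrank F (colIn m V) = m * finrank F V := by
  rw [(colInEquivPi V).finrank_eq, finrank_pi_fintype, Finset.sum_const, Finset.card_univ,
    Fintype.card_fin, smul_eq_mul]

theorem colIn_bot : colIn m (⊥ : Submodule F (Fin n → F)) = ⊥ :=
  Submodule.finrank_eq_zero.mp (by rw [finrank_colIn, finrank_bot, mul_zero])

theorem colIn_stdPerp_le_dualCode_colIn (V : Submodule F (Fin n → F)) :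
    colIn m (stdPerp V) ≤ dualCode (colIn m V) := by
  intro X hX Y hY
  rw [Finset.sum_comm]
  exact Finset.sum_eq_zero fun j _ => by simpa only [mul_comm] using hX j _ (hY j)

theorem dualCode_colIn (V : Submodule F (Fin n → F)) :
    dualCode (colIn m V) = colIn m (stdPerp V) := by
  refine (Submodule.eq_of_le_of_finrank_eq (colIn_stdPerp_le_dualCode_colIn V) ?_).symm
  have h_code := finrank_dualCode_add (colIn m V)
  have h_perp := congrArg (m * ·) (finrank_stdPerp_add V)
  simp only [mul_add, finrank_colIn] at h_code h_perp ⊢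
  linarith

theorem finrank_shortened_dualCode_add (C : Submodule F (Matrix (Fin n) (Fin m) F))
    (V : Submodule F (Fin n → F)) :
    finrank F (shortened (dualCode C) (stdPerp V)) + m * finrank F V
      = finrank F (dualCode C) + finrank F (shortened C V) := by
  have h_dual : shortened (dualCode C) (stdPerp V) = dualCode (C ⊔ colIn m V) := by
    rw [shortened, ← dualCode_colIn, dualCode_sup]
  have h_C := finrank_dualCode_add C
  have h_sup := finrank_dualCode_add (C ⊔ colIn m V)
  have h_modular := Submodule.finrank_sup_add_finrank_inf_eq C (colIn m V)
  rw [h_dual, shortened, ← finrank_colIn]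
  omega

end Codes

/-- the dual rank function `ρ_C*(V) = dim V − ρ_C(F_q^n) + ρ_C(V^⊥)` equals
`ρ_{C^⊥}(V)`, i.e. the dual `q`-polymatroid of `M_C` is `M_{C^⊥}`. -/
theorem dual_qPolymatroid_eq_qPolymatroid_dualCode (hm : 0 < m)
    (C : Submodule K (Matrix (Fin n) (Fin m) K)) (V : Submodule K (Fin n → K)) :
    (finrank K V : ℚ) - rhoCode C (⊤ : Submodule K (Fin n → K)) + rhoCode C (stdPerp V)
      = rhoCode (dualCode C) V := by
  have h_top : shortened C (stdPerp ⊤) = ⊥ := by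
    rw [shortened, stdPerp_top, colIn_bot, inf_bot_eq]
  have h_core : (finrank K (shortened (dualCode C) (stdPerp V)) : ℚ) + m * finrank K V
      = finrank K (dualCode C) + finrank K (shortened C V) := by
    exact_mod_cast finrank_shortened_dualCode_add C V
  have hm' : (m : ℚ) ≠ 0 := by exact_mod_cast hm.ne'
  rw [rhoCode, rhoCode, rhoCode, stdPerp_stdPerp, h_top, finrank_bot]
  field_simp
  linear_combination h_core
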